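/- arXiv:2408.04375 — 2 statements merged into one kernel-verified Lean document; each statement's English description precedes it below -/
import Mathlib

section
/- For integers $0 \le t \le k-1$ and real $x>1$, the function $Q_{k,t}(x) := \int_{-\infty}^\infty \frac{2^{2t}\,dw}{(x+\sqrt{x^2-1}\cosh w)^{k-t}(x+1+\sqrt{x^2-1}\,e^w)^{2t}}$ satisfies $Q_{k,t}(x) = 2^{-k+t+1}\int_{-1}^1 \frac{(1+u)^{k-t-1}(1-u)^{k+t-1}}{(x-u)^{k+t}}\,du$. -/
open MeasureTheory

/-- `Q_{k,t}(x) = ∫_{-∞}^∞ 2^{2t} dw / ((x + √(x²-1) cosh w)^{k-t} (x+1+√(x²-1) eʷ)^{2t})`. -/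
noncomputable def Qkt (k t : ℕ) (x : ℝ) : ℝ :=
  ∫ w : ℝ, (2 : ℝ) ^ (2 * t) /
    ((x + Real.sqrt (x ^ 2 - 1) * Real.cosh w) ^ (k - t) *
      (x + 1 + Real.sqrt (x ^ 2 - 1) * Real.exp w) ^ (2 * t))

/-!
Both sides are integrals of the same rational function of `v ∈ (0, ∞)`: the left one after
`v = √((x+1)/(x-1)) eʷ`, which turns `x + √(x²-1) cosh w` into a product of two linear factors
in `v`, and the right one after the Möbius substitution `u = (v-1)/(v+1)`.
-/

open Real Set

variable {E : Type*} [NormedAddCommGroup E] [NormedSpace ℝ E]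

theorem integral_exp_smul_comp_exp (g : ℝ → E) :
    ∫ w, exp w • g (exp w) = ∫ v in Ioi 0, g v := by
  rw [← range_exp, ← image_univ, integral_image_eq_integral_abs_deriv_smul MeasurableSet.univ
    (fun w _ ↦ (hasDerivAt_exp w).hasDerivWithinAt) exp_injective.injOn g, setIntegral_univ]
  simp_rw [abs_of_pos (exp_pos _)]

theorem integral_const_mul_exp_smul_comp {c : ℝ} (hc : 0 < c) (g : ℝ → E) :
    ∫ w, (c * exp w) • g (c * exp w) = ∫ v in Ioi 0, g v := by
  have hshift (w : ℝ) : c * exp w = exp (w + log c) := by rw [exp_add, exp_log hc, mul_comm]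
  simp_rw [hshift]
  rw [integral_add_right_eq_self (fun w ↦ exp w • g (exp w)), integral_exp_smul_comp_exp]

theorem integral_Ioo_neg_one_one_eq_integral_Ioi (g : ℝ → E) :
    ∫ u in Ioo (-1) 1, g u = ∫ v in Ioi 0, (2 / (v + 1) ^ 2) • g ((v - 1) / (v + 1)) := by
  have himage : (fun v ↦ (v - 1) / (v + 1)) '' Ioi 0 = Ioo (-1 : ℝ) 1 := by
    ext u
    simp only [mem_image, mem_Ioi, mem_Ioo]
    constructor
    · rintro ⟨v, hv, rfl⟩
      have hv1 : 0 < v + 1 := by linarith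
      exact ⟨by rw [lt_div_iff₀ hv1]; linarith, by rw [div_lt_one hv1]; linarith⟩
    · rintro ⟨hu₁, hu₂⟩
      refine ⟨(1 + u) / (1 - u), div_pos (by linarith) (by linarith), ?_⟩
      have : 1 - u ≠ 0 := by linarith
      field_simp
      ring
  have hderiv : ∀ v ∈ Ioi (0 : ℝ),
      HasDerivWithinAt (fun v ↦ (v - 1) / (v + 1)) (2 / (v + 1) ^ 2) (Ioi 0) v := by
    intro v (hv : 0 < v)
    have hquot : HasDerivAt (fun v : ℝ ↦ (v - 1) / (v + 1))
        ((1 * (v + 1) - (v - 1) * 1) / (v + 1) ^ 2) v :=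
      ((hasDerivAt_id' v).sub_const 1).div ((hasDerivAt_id' v).add_const 1) (by linarith)
    exact (hquot.congr_deriv (by ring)).hasDerivWithinAt
  have hinj : InjOn (fun v : ℝ ↦ (v - 1) / (v + 1)) (Ioi 0) := by
    intro v₁ (h₁ : 0 < v₁) v₂ (h₂ : 0 < v₂) h
    have : v₁ + 1 ≠ 0 := by linarith
    have : v₂ + 1 ≠ 0 := by linarith
    field_simp at h
    linarith
  rw [← himage, integral_image_eq_integral_abs_deriv_smul measurableSet_Ioi hderiv hinj g]
  refine setIntegral_congr_fun measurableSet_Ioi fun v (hv : 0 < v) ↦ ?_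
  rw [abs_of_pos (by positivity)]

noncomputable def ratKernel (t m : ℕ) (x v : ℝ) : ℝ :=
  2 ^ (2 * t + m + 1) * v ^ m / (((x - 1) * v + (x + 1)) ^ (2 * t + m + 1) * (v + 1) ^ (m + 1))

/-- With `a = √(x-1)`, `b = √(x+1)` and `v = (b/a) eʷ` one has
`x + ab cosh w = (a eʷ + b)(b eʷ + a) / (2eʷ)` and `x + 1 + ab eʷ = b (a eʷ + b)`. -/
theorem div_pow_cosh_mul_pow_eq_ratKernel (t m : ℕ) {x a b : ℝ} (ha : 0 < a) (hb : 0 < b)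
    (ha2 : a ^ 2 = x - 1) (hb2 : b ^ 2 = x + 1) (w : ℝ) :
    (2 : ℝ) ^ (2 * t) / ((x + a * b * cosh w) ^ (m + 1) * (x + 1 + a * b * exp w) ^ (2 * t)) =
      (b / a * exp w) * ratKernel t m x (b / a * exp w) := by
  rw [cosh_eq, exp_neg, ratKernel]
  have hcosh : x + a * b * ((exp w + (exp w)⁻¹) / 2) =
      (a * exp w + b) * (b * exp w + a) / (2 * exp w) := by
    field_simp
    linear_combination (-exp w) * ha2 - exp w * hb2
  have hlin₁ : x + 1 + a * b * exp w = b * (a * exp w + b) := by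
    linear_combination -hb2
  have hlin₂ : (x - 1) * (b / a * exp w) + (x + 1) = b * (a * exp w + b) := by
    rw [← ha2, ← hb2]; field_simp
  have hlin₃ : b / a * exp w + 1 = (b * exp w + a) / a := by field_simp
  rw [hcosh, hlin₁, hlin₂, hlin₃]
  simp only [mul_pow, div_pow]
  field_simp
  ring

theorem Qkt_eq_integral_ratKernel (t m : ℕ) {x : ℝ} (hx : 1 < x) :
    Qkt (t + 1 + m) t x = ∫ v in Ioi 0, ratKernel t m x v := by
  have ha : 0 < √(x - 1) := sqrt_pos.2 (by linarith)
  have hb : 0 < √(x + 1) := sqrt_pos.2 (by linarith)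
  have hsqrt : √(x ^ 2 - 1) = √(x - 1) * √(x + 1) := by
    rw [← sqrt_mul (by linarith)]; ring_nf
  rw [← integral_const_mul_exp_smul_comp (div_pos hb ha), Qkt,
    show t + 1 + m - t = m + 1 by omega]
  simp_rw [hsqrt, div_pow_cosh_mul_pow_eq_ratKernel t m ha hb (sq_sqrt (by linarith))
    (sq_sqrt (by linarith)), smul_eq_mul]

theorem div_sq_mul_comp_mobius_eq_ratKernel (t m : ℕ) (x : ℝ) {v : ℝ} (hv : 0 < v) :
    2 / (v + 1) ^ 2 * ((1 + (v - 1) / (v + 1)) ^ m * (1 - (v - 1) / (v + 1)) ^ (2 * t + m) /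
      (x - (v - 1) / (v + 1)) ^ (2 * t + m + 1)) = 2 ^ m * ratKernel t m x v := by
  have hplus : 1 + (v - 1) / (v + 1) = 2 * v / (v + 1) := by field_simp; ring
  have hminus : 1 - (v - 1) / (v + 1) = 2 / (v + 1) := by field_simp; ring
  have hden : x - (v - 1) / (v + 1) = ((x - 1) * v + (x + 1)) / (v + 1) := by field_simp; ring
  rw [hplus, hminus, hden, ratKernel]
  simp only [mul_pow, div_pow]
  field_simp
  ring

theorem integral_neg_one_one_eq_integral_ratKernel (t m : ℕ) (x : ℝ) :
    ∫ u in (-1 : ℝ)..1, (1 + u) ^ m * (1 - u) ^ (2 * t + m) / (x - u) ^ (2 * t + m + 1) =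
      2 ^ m * ∫ v in Ioi 0, ratKernel t m x v := by
  rw [intervalIntegral.integral_of_le (by norm_num), integral_Ioc_eq_integral_Ioo,
    integral_Ioo_neg_one_one_eq_integral_Ioi, ← integral_const_mul]
  exact setIntegral_congr_fun measurableSet_Ioi fun v hv ↦
    div_sq_mul_comp_mobius_eq_ratKernel t m x hv

/-- For `0 ≤ t ≤ k-1` and `x > 1`,
`Q_{k,t}(x) = 2^{-k+t+1} ∫_{-1}^1 (1+u)^{k-t-1}(1-u)^{k+t-1}/(x-u)^{k+t} du`. -/
theorem statement2 (k t : ℕ) (hk : 1 ≤ k) (ht : t ≤ k - 1) (x : ℝ) (hx : 1 < x) :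
    Qkt k t x = (2 : ℝ) ^ ((t : ℤ) + 1 - (k : ℤ)) *
      ∫ u in (-1 : ℝ)..1, (1 + u) ^ (k - t - 1) * (1 - u) ^ (k + t - 1) / (x - u) ^ (k + t) := by
  obtain ⟨m, rfl⟩ : ∃ m, k = t + 1 + m := ⟨k - t - 1, by omega⟩
  rw [show t + 1 + m - t - 1 = m by omega, show t + 1 + m + t - 1 = 2 * t + m by omega,
    show t + 1 + m + t = 2 * t + m + 1 by omega,
    integral_neg_one_one_eq_integral_ratKernel, Qkt_eq_integral_ratKernel t m hx,
    show (t : ℤ) + 1 - ((t + 1 + m : ℕ) : ℤ) = -(m : ℤ) by push_cast; ring,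
    zpow_neg, zpow_natCast, inv_mul_cancel_left₀ (by positivity)]
end

section
/- For integers $0 \le t \le k-1$ and real $x>1$, $Q_{k,t}(x) = 2 Q_{k-t-1}^{(0,2t)}(x)$, where $Q_n^{(\alpha,\beta)}$ is the Jacobi function of the second kind. -/
open MeasureTheory

/-- The Jacobi function of the second kind
`Q_n^{(α,β)}(x) = (2^{-n-1}/((x-1)^α (x+1)^β)) ∫_{-1}^1 (1-u)^{n+α}(1+u)^{n+β}/(x-u)^{n+1} du`. -/
noncomputable def jacobiQ (n α β : ℕ) (x : ℝ) : ℝ :=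
  (2 : ℝ) ^ (-(n : ℤ) - 1) / ((x - 1) ^ α * (x + 1) ^ β) *
    ∫ u in (-1 : ℝ)..1, (1 - u) ^ (n + α) * (1 + u) ^ (n + β) / (x - u) ^ (n + 1)

/-!
The substitution `u = (x + 1 - s eʷ) / (x + 1 + s eʷ)` with `s = √(x² - 1)` maps `ℝ` onto
`(-1, 1)` and turns the Jacobi integral into `Q_{k,t}`: with `E = s eʷ`, one has
`1 - u = 2E / (x+1+E)`, `1 + u = 2(x+1) / (x+1+E)`, `x - u = (x+1)(x-1+E) / (x+1+E)`, and,
because `s² = x² - 1`, `x + s cosh w = (x+1+E)(x-1+E) / (2E)`.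
-/

open Real

noncomputable def expMobius (a s w : ℝ) : ℝ := (a - s * exp w) / (a + s * exp w)

section expMobius

variable {a s : ℝ}

lemma hasDerivAt_expMobius (ha : 0 < a) (hs : 0 < s) (w : ℝ) :
    HasDerivAt (expMobius a s) (-(2 * a * (s * exp w) / (a + s * exp w) ^ 2)) w := by
  have hE := hasDerivAt_exp w
  have hden : a + s * exp w ≠ 0 := by positivity
  exact (((hE.const_mul s).const_sub a).div ((hE.const_mul s).const_add a) hden).congr_deriv
    (by ring)

lemma injective_expMobius (ha : 0 < a) (hs : 0 < s) : Function.Injective (expMobius a s) := by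
  intro w₁ w₂ h
  have hd₁ : a + s * exp w₁ ≠ 0 := by positivity
  have hd₂ : a + s * exp w₂ ≠ 0 := by positivity
  rw [expMobius, expMobius, div_eq_div_iff hd₁ hd₂] at h
  refine exp_injective (mul_left_cancel₀ (by positivity : 2 * a * s ≠ 0) ?_)
  linear_combination -h

lemma range_expMobius (ha : 0 < a) (hs : 0 < s) :
    Set.range (expMobius a s) = Set.Ioo (-1) 1 := by
  ext u
  simp only [Set.mem_range, Set.mem_Ioo]
  constructor
  · rintro ⟨w, rfl⟩
    have hE := exp_pos w
    have hd : 0 < a + s * exp w := by positivity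
    rw [expMobius, lt_div_iff₀ hd, div_lt_one hd]
    constructor <;> nlinarith
  · rintro ⟨hu₁, hu₂⟩
    have h₁ : 0 < 1 + u := by linarith
    have h₂ : 0 < 1 - u := by linarith
    refine ⟨log (a * (1 - u) / ((1 + u) * s)), ?_⟩
    rw [expMobius, exp_log (by positivity)]
    field_simp
    ring

lemma intervalIntegral_neg_one_one_eq_integral_expMobius (ha : 0 < a) (hs : 0 < s)
    (g : ℝ → ℝ) :
    ∫ u in (-1 : ℝ)..1, g u =
      ∫ w : ℝ, 2 * a * (s * exp w) / (a + s * exp w) ^ 2 * g (expMobius a s w) := by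
  have h := integral_image_eq_integral_abs_deriv_smul MeasurableSet.univ
    (fun w _ => (hasDerivAt_expMobius ha hs w).hasDerivWithinAt)
    (injective_expMobius ha hs).injOn g
  rw [Set.image_univ, range_expMobius ha hs, Measure.restrict_univ] at h
  rw [intervalIntegral.integral_of_le (by norm_num), integral_Ioc_eq_integral_Ioo, h]
  congr 1 with w
  rw [abs_neg, abs_of_pos (by positivity), smul_eq_mul]

lemma one_sub_expMobius (ha : 0 < a) (hs : 0 < s) (w : ℝ) :
    1 - expMobius a s w = 2 * (s * exp w) / (a + s * exp w) := by
  have hd : a + s * exp w ≠ 0 := by positivity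
  rw [expMobius]; field_simp; ring

lemma one_add_expMobius (ha : 0 < a) (hs : 0 < s) (w : ℝ) :
    1 + expMobius a s w = 2 * a / (a + s * exp w) := by
  have hd : a + s * exp w ≠ 0 := by positivity
  rw [expMobius]; field_simp; ring

end expMobius

lemma sub_expMobius_add_one {x s : ℝ} (hx : 0 < x + 1) (hs : 0 < s) (w : ℝ) :
    x - expMobius (x + 1) s w = (x + 1) * (x - 1 + s * exp w) / (x + 1 + s * exp w) := by
  have hd : x + 1 + s * exp w ≠ 0 := by positivity
  rw [expMobius]; field_simp; ring

lemma add_mul_cosh_eq_of_sq_eq {x s : ℝ} (hs : 0 < s) (hs2 : s ^ 2 = x ^ 2 - 1) (w : ℝ) :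
    x + s * cosh w = (x + 1 + s * exp w) * (x - 1 + s * exp w) / (2 * (s * exp w)) := by
  rw [eq_div_iff (by positivity), cosh_eq, exp_neg]
  field_simp
  linear_combination hs2

lemma jacobi_integrand_transform (n t : ℕ) {a E B : ℝ} (ha : 0 < a) (hE : 0 < E) (hB : 0 < B) :
    2 * ((2 : ℝ) ^ (-(n : ℤ) - 1) / a ^ (2 * t)) *
        (2 * a * E / (a + E) ^ 2 *
          ((2 * E / (a + E)) ^ n * (2 * a / (a + E)) ^ (n + 2 * t) / (a * B / (a + E)) ^ (n + 1))) =
      (2 : ℝ) ^ (2 * t) / (((a + E) * B / (2 * E)) ^ (n + 1) * (a + E) ^ (2 * t)) := by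
  have hA : 0 < a + E := by positivity
  rw [zpow_sub₀ two_ne_zero, zpow_neg, zpow_natCast, zpow_one]
  simp only [div_pow, mul_pow]
  field_simp
  ring

/-- For `0 ≤ t ≤ k-1` and `x > 1`, `Q_{k,t}(x) = 2 Q_{k-t-1}^{(0,2t)}(x)`. -/
theorem statement3 (k t : ℕ) (hk : 1 ≤ k) (ht : t ≤ k - 1) (x : ℝ) (hx : 1 < x) :
    Qkt k t x = 2 * jacobiQ (k - t - 1) 0 (2 * t) x := by
  obtain ⟨n, rfl⟩ : ∃ n, k = n + t + 1 := ⟨k - t - 1, by omega⟩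
  have ha : 0 < x + 1 := by linarith
  have hs : 0 < √(x ^ 2 - 1) := sqrt_pos.mpr (by nlinarith)
  have hs2 : √(x ^ 2 - 1) ^ 2 = x ^ 2 - 1 := sq_sqrt (by nlinarith)
  rw [Qkt, jacobiQ, show n + t + 1 - t = n + 1 by omega, Nat.add_sub_cancel,
    intervalIntegral_neg_one_one_eq_integral_expMobius ha hs, ← mul_assoc, ← integral_const_mul]
  congr 1 with w
  have hE : 0 < √(x ^ 2 - 1) * exp w := by positivity
  rw [one_sub_expMobius ha hs, one_add_expMobius ha hs, sub_expMobius_add_one ha hs,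
    add_mul_cosh_eq_of_sq_eq hs hs2, pow_zero, one_mul, add_zero]
  exact (jacobi_integrand_transform n t ha hE (by linarith)).symm
end
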